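/- Let 𝒟 be a dataset, Π a program, and I a stable HT-model of 𝒟 and Π. Then the pair (A¹_{𝒟,Π}(I,I), I) is an HT-model of 𝒟 and Π (in particular A¹_{𝒟,Π}(I,I) ⊆ I), and consequently A¹_{𝒟,Π}(I,I) = I. -/

import Mathlib

/- DatalogMTL with negation: common definitions.
   The timeline `T` is an arbitrary linearly ordered additive commutative group
   (covering both ℤ and ℚ); `A` is the type of ground relational atoms. -/

namespace DatalogMTL

/-- An interval on the timeline: a nonempty convex subset whose infimum and
supremum lie in `T ∪ {−∞, +∞}` (i.e. if bounded below/above, a greatest lower /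
least upper bound exists in `T`). -/
structure TInterval (T : Type*) [AddCommGroup T] [LinearOrder T] [IsOrderedAddMonoid T] where
  carrier : Set T
  nonempty : carrier.Nonempty
  convex : ∀ ⦃t₁ t₂ t : T⦄, t₁ ∈ carrier → t₂ ∈ carrier → t₁ < t → t < t₂ → t ∈ carrier
  exists_glb : BddBelow carrier → ∃ a, IsGLB carrier a
  exists_lub : BddAbove carrier → ∃ b, IsLUB carrier b

/-- A non-negative interval. -/
def TInterval.Nonneg {T : Type*} [AddCommGroup T] [LinearOrder T] [IsOrderedAddMonoid T] (δ : TInterval T) : Prop :=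
  ∀ t ∈ δ.carrier, 0 ≤ t

/-- The type of non-negative intervals. -/
abbrev NNInterval (T : Type*) [AddCommGroup T] [LinearOrder T] [IsOrderedAddMonoid T] :=
  {δ : TInterval T // δ.Nonneg}

/-- A (two-valued) interpretation assigns to each timepoint a set of ground
relational atoms; the order is pointwise inclusion. -/
abbrev Interp (T A : Type*) := T → Set A

/-- Ground metric atoms. -/
inductive MetricAtom (T : Type*) [AddCommGroup T] [LinearOrder T] [IsOrderedAddMonoid T] (A : Type*) where
  | top
  | bot
  | rel (a : A)
  | dMinus (δ : NNInterval T) (M : MetricAtom T A)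
  | dPlus (δ : NNInterval T) (M : MetricAtom T A)
  | boxMinus (δ : NNInterval T) (M : MetricAtom T A)
  | boxPlus (δ : NNInterval T) (M : MetricAtom T A)
  | sSince (δ : NNInterval T) (M₁ M₂ : MetricAtom T A)
  | sUntil (δ : NNInterval T) (M₁ M₂ : MetricAtom T A)

/-- Ground head atoms: `⊤ | P(s) | ⊟_δ M | ⊞_δ M`. -/
inductive HeadAtom (T : Type*) [AddCommGroup T] [LinearOrder T] [IsOrderedAddMonoid T] (A : Type*) where
  | top
  | rel (a : A)
  | boxMinus (δ : NNInterval T) (M : HeadAtom T A)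
  | boxPlus (δ : NNInterval T) (M : HeadAtom T A)

variable {T A : Type*} [AddCommGroup T] [LinearOrder T] [IsOrderedAddMonoid T]

/-- Head atoms are metric atoms. -/
def HeadAtom.toMetric : HeadAtom T A → MetricAtom T A
  | .top => .top
  | .rel a => .rel a
  | .boxMinus δ M => .boxMinus δ M.toMetric
  | .boxPlus δ M => .boxPlus δ M.toMetric

/-- Two-valued semantics: `sat I M t` holds iff `⟦M⟧_I(t) = true`
(the truth order `false ≤τ true` is implication). -/
def sat (I : Interp T A) : MetricAtom T A → T → Prop
  | .top, _ => True
  | .bot, _ => False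
  | .rel a, t => a ∈ I t
  | .dMinus δ M, t => ∃ t', t - t' ∈ δ.1.carrier ∧ sat I M t'
  | .dPlus δ M, t => ∃ t', t' - t ∈ δ.1.carrier ∧ sat I M t'
  | .boxMinus δ M, t => ∀ t', t - t' ∈ δ.1.carrier → sat I M t'
  | .boxPlus δ M, t => ∀ t', t' - t ∈ δ.1.carrier → sat I M t'
  | .sSince δ M₁ M₂, t =>
      ∃ t', t - t' ∈ δ.1.carrier ∧ sat I M₂ t' ∧ ∀ t'', t' < t'' → t'' < t → sat I M₁ t''
  | .sUntil δ M₁ M₂, t =>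
      ∃ t', t' - t ∈ δ.1.carrier ∧ sat I M₂ t' ∧ ∀ t'', t < t'' → t'' < t' → sat I M₁ t''

/-- A ground rule body `M₁ ∧ … ∧ M_k ∧ not M_{k+1} ∧ … ∧ not M_m`. -/
structure Body (T : Type*) [AddCommGroup T] [LinearOrder T] [IsOrderedAddMonoid T] (A : Type*) where
  pos : List (MetricAtom T A)
  neg : List (MetricAtom T A)

/-- Two-valued evaluation of a body: the `≤τ`-infimum (conjunction) of its literals. -/
def Body.holds (B : Body T A) (I : Interp T A) (t : T) : Prop :=
  (∀ M ∈ B.pos, sat I M t) ∧ (∀ M ∈ B.neg, ¬ sat I M t)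

/-- A ground rule `M ← B`. -/
structure Rule (T : Type*) [AddCommGroup T] [LinearOrder T] [IsOrderedAddMonoid T] (A : Type*) where
  head : HeadAtom T A
  body : Body T A

/-- A program, represented by its grounding `ground(Π)`: a set of ground rules. -/
abbrev Program (T : Type*) [AddCommGroup T] [LinearOrder T] [IsOrderedAddMonoid T] (A : Type*) := Set (Rule T A)

/-- The function `F` linking a ground head atom to the (atom, timepoint) pairs it refers to. -/
def F : HeadAtom T A → T → Set (HeadAtom T A × T)
  | .boxMinus δ M, t => ⋃ t' ∈ {s : T | t - s ∈ δ.1.carrier}, F M t'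
  | .boxPlus δ M, t => ⋃ t' ∈ {s : T | s - t ∈ δ.1.carrier}, F M t'
  | .top, t => {(.top, t)}
  | .rel a, t => {(.rel a, t)}

/-- A dataset: a finite set of relational facts `P(s)@δ`. -/
structure Dataset (T : Type*) [AddCommGroup T] [LinearOrder T] [IsOrderedAddMonoid T] (A : Type*) where
  facts : Set (A × TInterval T)
  finite : facts.Finite

/-- `I` is a model of the dataset `D`. -/
def Interp.modelOfDataset (I : Interp T A) (D : Dataset T A) : Prop :=
  ∀ a δ, (a, δ) ∈ D.facts → ∀ t ∈ δ.carrier, a ∈ I t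

/-- `I` is a two-valued model of `D` and `Π`. -/
def IsTwoValModel (I : Interp T A) (D : Dataset T A) (P : Program T A) : Prop :=
  I.modelOfDataset D ∧ ∀ r ∈ P, ∀ t : T, r.body.holds I t → sat I r.head.toMetric t

/- Three-valued truth values are identified with consistent pairs of (Prop-valued)
truth values: `true = (True, True)`, `undef = (False, True)`, `false = (False, False)`.
The truth order `false ≤τ undef ≤τ true` is the componentwise order. -/

/-- The three-valued value of a ground metric atom in `𝓘 = (I₁, I₂)`. -/
def tv3 (I₁ I₂ : Interp T A) (M : MetricAtom T A) (t : T) : Prop × Prop :=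
  (sat I₁ M t, sat I₂ M t)

/-- The three-valued value of a negated ground metric atom `not M` in `𝓘 = (I₁, I₂)`:
the inverse `(·)⁻¹` of the value of `M`. -/
def tv3Not (I₁ I₂ : Interp T A) (M : MetricAtom T A) (t : T) : Prop × Prop :=
  (¬ sat I₂ M t, ¬ sat I₁ M t)

/-- Three-valued evaluation of a body: the `≤τ`-infimum of the values of its literals. -/
def Body.holds3 (B : Body T A) (I₁ I₂ : Interp T A) (t : T) : Prop × Prop :=
  ((∀ M ∈ B.pos, sat I₁ M t) ∧ (∀ M ∈ B.neg, ¬ sat I₂ M t),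
   (∀ M ∈ B.pos, sat I₂ M t) ∧ (∀ M ∈ B.neg, ¬ sat I₁ M t))

/-- The truth order `≤τ` on (pair-encoded) truth values. -/
def tauLE (u v : Prop × Prop) : Prop := (u.1 → v.1) ∧ (u.2 → v.2)

/-- The precision order `≤p` on (pair-encoded) truth values: `undef ≤p false`, `undef ≤p true`. -/
def precLE (u v : Prop × Prop) : Prop := (u.1 → v.1) ∧ (v.2 → u.2)

/-- A truth value equals `true = (True, True)`. -/
def tvIsTrue (v : Prop × Prop) : Prop := v.1 ∧ v.2

/-- A truth value differs from `false = (False, False)`. -/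
def tvNotFalse (v : Prop × Prop) : Prop := v.1 ∨ v.2

/-- The `≤τ`-infimum of a set of (pair-encoded) truth values. -/
def tvInf (S : Set (Prop × Prop)) : Prop × Prop := (∀ v ∈ S, v.1, ∀ v ∈ S, v.2)

/-- `(I₁, I₂)` is a three-valued model of the program `Π`. -/
def IsThreeValModelOfProgram (I₁ I₂ : Interp T A) (P : Program T A) : Prop :=
  ∀ r ∈ P, ∀ t : T, tauLE (r.body.holds3 I₁ I₂ t) (tv3 I₁ I₂ r.head.toMetric t)

/-- `(I₁, I₂)` is a three-valued model of `D` and `Π`. -/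
def IsThreeValModel (I₁ I₂ : Interp T A) (D : Dataset T A) (P : Program T A) : Prop :=
  IsThreeValModelOfProgram I₁ I₂ P ∧ I₁.modelOfDataset D

/-- The atoms holding at `t` by virtue of the dataset alone. -/
def dataFacts (D : Dataset T A) (t : T) : Set A :=
  {a | ∃ δ : TInterval T, (a, δ) ∈ D.facts ∧ t ∈ δ.carrier}

/-- The immediate consequence operator `T_{𝒟,Π}`. -/
def Tds (D : Dataset T A) (P : Program T A) (I : Interp T A) : Interp T A := fun t =>
  dataFacts D t ∪
    {a | ∃ r ∈ P, ∃ t' : T, r.body.holds I t' ∧ (HeadAtom.rel a, t) ∈ F r.head t'}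

/-- The first component `A¹_{𝒟,Π}` of the three-valued immediate consequence operator. -/
def A1 (D : Dataset T A) (P : Program T A) (I₁ I₂ : Interp T A) : Interp T A := fun t =>
  dataFacts D t ∪
    {a | ∃ r ∈ P, ∃ t' : T, tvIsTrue (r.body.holds3 I₁ I₂ t') ∧ (HeadAtom.rel a, t) ∈ F r.head t'}

/-- The second component `A²_{𝒟,Π}` of the three-valued immediate consequence operator. -/
def A2 (D : Dataset T A) (P : Program T A) (I₁ I₂ : Interp T A) : Interp T A := fun t =>
  dataFacts D t ∪
    {a | ∃ r ∈ P, ∃ t' : T, tvNotFalse (r.body.holds3 I₁ I₂ t') ∧ (HeadAtom.rel a, t) ∈ F r.head t'}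

/-- `(I₁, I₂)` is an HT-model of `D` and `Π` (Definition of Wałęga et al.). -/
def IsHTModel (D : Dataset T A) (P : Program T A) (I₁ I₂ : Interp T A) : Prop :=
  I₁.modelOfDataset D ∧ ∀ r ∈ P, ∀ t : T,
    (((∀ M ∈ r.body.pos, sat I₁ M t) ∧ (∀ M ∈ r.body.neg, ¬ sat I₂ M t)) →
        sat I₁ r.head.toMetric t) ∧
    (((∀ M ∈ r.body.pos, sat I₂ M t) ∧ (∀ M ∈ r.body.neg, ¬ sat I₂ M t)) →
        sat I₂ r.head.toMetric t)

/-- `I` is a stable HT-model of `D` and `Π`: `(I,I)` is an HT-model and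
`I = ⊓ {J : (J,I) is an HT-model of D and Π}`. -/
def IsStableHTModel (D : Dataset T A) (P : Program T A) (I : Interp T A) : Prop :=
  IsHTModel D P I I ∧ I = sInf {J : Interp T A | IsHTModel D P J I}

end DatalogMTL

/-!
A rule fires in `A¹(I, I)` only when its body is true in `(I, I)`, so the HT-model condition
of `(I, I)` puts its head atoms into `I`: hence `A¹(I, I) ≤ I`. Conversely, `A¹(I, I)` contains
the dataset and the heads of all rules whose bodies hold in `(A¹(I, I), I)` (positive literals
transfer up to `I` by monotonicity), so `(A¹(I, I), I)` is an HT-model. Stability makes `I`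
the least first component of such a model, which gives `I ≤ A¹(I, I)`.
-/

namespace DatalogMTL

variable {T A : Type*} [AddCommGroup T] [LinearOrder T] [IsOrderedAddMonoid T]

theorem sat_mono {I I' : Interp T A} (h : I ≤ I') :
    ∀ (M : MetricAtom T A) (t : T), sat I M t → sat I' M t := by
  intro M
  induction M with
  | top | bot => exact fun _ hs => hs
  | rel a => exact fun t hs => h t hs
  | dMinus δ M ih | dPlus δ M ih =>
      rintro t ⟨t', hδ, hs⟩
      exact ⟨t', hδ, ih t' hs⟩
  | boxMinus δ M ih | boxPlus δ M ih => exact fun t hs t' hδ => ih t' (hs t' hδ)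
  | sSince δ M₁ M₂ ih₁ ih₂ | sUntil δ M₁ M₂ ih₁ ih₂ =>
      rintro t ⟨t', hδ, h₂, h₁⟩
      exact ⟨t', hδ, ih₂ t' h₂, fun t'' ha hb => ih₁ t'' (h₁ t'' ha hb)⟩

theorem sat_toMetric_iff {I : Interp T A} :
    ∀ (M : HeadAtom T A) (t : T),
      sat I M.toMetric t ↔ ∀ a s, (HeadAtom.rel a, s) ∈ F M t → a ∈ I s := by
  intro M
  induction M with
  | top => simp [HeadAtom.toMetric, sat, F]
  | rel b => simp [HeadAtom.toMetric, sat, F]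
  | boxMinus δ M ih | boxPlus δ M ih =>
      intro t
      simp only [HeadAtom.toMetric, sat, F, ih, Set.mem_iUnion, Set.mem_ofPred_eq]
      grind

theorem A1_le_of_isHTModel {D : Dataset T A} {P : Program T A} {I₁ I₂ : Interp T A}
    (h : IsHTModel D P I₁ I₂) : A1 D P I₁ I₂ ≤ I₁ := by
  rintro t a (⟨δ, hmem, htδ⟩ | ⟨r, hrP, t', hbody, hF⟩)
  · exact h.1 a δ hmem t htδ
  · exact (sat_toMetric_iff r.head t').1 ((h.2 r hrP t').1 hbody.1) a t hF

theorem isHTModel_A1 {D : Dataset T A} {P : Program T A} {I₁ I₂ : Interp T A}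
    (h : IsHTModel D P I₁ I₂) (h₁₂ : I₁ ≤ I₂) : IsHTModel D P (A1 D P I₁ I₂) I₂ := by
  have hA1 : A1 D P I₁ I₂ ≤ I₁ := A1_le_of_isHTModel h
  refine ⟨fun a δ hmem t htδ => Or.inl ⟨δ, hmem, htδ⟩, fun r hrP t => ⟨?_, (h.2 r hrP t).2⟩⟩
  rintro ⟨hpos, hneg⟩
  have hpos₁ : ∀ M ∈ r.body.pos, sat I₁ M t := fun M hM => sat_mono hA1 M t (hpos M hM)
  have hbody : tvIsTrue (r.body.holds3 I₁ I₂ t) :=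
    ⟨⟨hpos₁, hneg⟩, fun M hM => sat_mono h₁₂ M t (hpos₁ M hM),
      fun M hM hs => hneg M hM (sat_mono h₁₂ M t hs)⟩
  exact (sat_toMetric_iff r.head t).2 fun a s hF => Or.inr ⟨r, hrP, t, hbody, hF⟩

end DatalogMTL

/-- If `I` is a stable HT-model of `D` and `Π`, then
`(A¹_{𝒟,Π}(I,I), I)` is an HT-model of `D` and `Π` (in particular
`A¹_{𝒟,Π}(I,I) ⊆ I`), and consequently `A¹_{𝒟,Π}(I,I) = I`. -/
theorem statement15 {T A : Type*} [AddCommGroup T] [LinearOrder T] [IsOrderedAddMonoid T]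
    (D : DatalogMTL.Dataset T A) (P : DatalogMTL.Program T A)
    (I : DatalogMTL.Interp T A) (h : DatalogMTL.IsStableHTModel D P I) :
    DatalogMTL.IsHTModel D P (DatalogMTL.A1 D P I I) I ∧
    DatalogMTL.A1 D P I I ≤ I ∧
    DatalogMTL.A1 D P I I = I := by
  obtain ⟨hI, hstable⟩ := h
  have hHT := DatalogMTL.isHTModel_A1 hI le_rfl
  have hle := DatalogMTL.A1_le_of_isHTModel hI
  exact ⟨hHT, hle, le_antisymm hle (hstable.le.trans (sInf_le hHT))⟩
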